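/- Let X be a random vector in ℝⁿ with density p admitting a score function, and consider a one-hidden-layer network y(x) = σ₂(A₂ σ₁(A₁ x)) where σ₁ : ℝᵏ → ℝᵏ is an elementwise continuously differentiable activation, A₁ is k × n, A₂ is m × k, and σ₂ : ℝᵐ → ℝᵐ is continuously differentiable, all satisfying Stein regularity conditions. Then M := E[y(X) (∇ log p(X))ᵀ] = -E[Dσ₂(A₂σ₁(A₁X)) · A₂ · diag(σ₁'(A₁X))] · A₁, where σ₁'(A₁X) is the vector of derivatives of the elementwise activation. In particular, the row space of M is contained in the row space of A₁. -/

import Mathlib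

/-!
Stein's identity, taken as the regularity hypothesis, turns `M` into `-E[Dy(X)]`. By the chain
rule the Jacobian of `y = σ₂ ∘ A₂ ∘ σ₁ ∘ A₁` factors as `Dσ₂ · A₂ · diag(σ₁') · A₁`, and `A₁` is
constant, so it leaves the expectation on the right: `M = -B A₁`. Every row of `B A₁` is a
combination of rows of `A₁`.
-/

open MeasureTheory
open Matrix

theorem ContinuousLinearMap.apply_eq_sum_mul_apply_single {ι : Type*} [Fintype ι]
    [DecidableEq ι] (f : (ι → ℝ) →L[ℝ] ℝ) (v : ι → ℝ) :
    f v = ∑ q, v q * f (Pi.single q 1) := by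
  conv_lhs => rw [← Finset.univ_sum_single v]
  simp only [map_sum]
  refine Finset.sum_congr rfl fun q _ => ?_
  rw [← smul_eq_mul, ← map_smul, ← Pi.single_smul', smul_eq_mul, mul_one]

theorem Matrix.span_range_mul_le {ι κ ν R : Type*} [Fintype κ] [CommSemiring R]
    (B : Matrix ι κ R) (A : Matrix κ ν R) :
    Submodule.span R (Set.range (B * A)) ≤ Submodule.span R (Set.range A) := by
  rw [Submodule.span_le]
  rintro _ ⟨i, rfl⟩
  rw [SetLike.mem_coe, Matrix.mul_apply_eq_vecMul, Matrix.vecMul_eq_sum]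
  exact Submodule.sum_mem _ fun l _ => Submodule.smul_mem _ _ (Submodule.subset_span ⟨l, rfl⟩)

@[fun_prop]
theorem Matrix.differentiable_mulVec {ι κ : Type*} [Fintype ι] (A : Matrix κ ι ℝ) :
    Differentiable ℝ fun v => A *ᵥ v :=
  (LinearMap.toContinuousLinearMap (mulVecLin A)).differentiable

section ChainRule

variable {ι κ ν F : Type*} [Fintype ι] [Fintype κ] [NormedAddCommGroup F] [NormedSpace ℝ F]

theorem fderiv_comp_mulVec_apply {f : (κ → ℝ) → F} (A : Matrix κ ι ℝ) {u : ι → ℝ}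
    (hf : DifferentiableAt ℝ f (A *ᵥ u)) (v : ι → ℝ) :
    fderiv ℝ (fun w => f (A *ᵥ w)) u v = fderiv ℝ f (A *ᵥ u) (A *ᵥ v) :=
  DFunLike.congr_fun
    (hf.hasFDerivAt.comp u (LinearMap.toContinuousLinearMap (mulVecLin A)).hasFDerivAt).fderiv v

theorem fderiv_comp_map_apply {g : (ι → ℝ) → F} {s : ℝ → ℝ} {x : ι → ℝ}
    (hg : DifferentiableAt ℝ g (fun l => s (x l))) (hs : ∀ l, DifferentiableAt ℝ s (x l))
    (v : ι → ℝ) :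
    fderiv ℝ (fun y => g (fun l => s (y l))) x v
      = fderiv ℝ g (fun l => s (x l)) (fun l => deriv s (x l) * v l) := by
  have hmap : HasFDerivAt (fun y : ι → ℝ => fun l => s (y l))
      (ContinuousLinearMap.pi fun l => deriv s (x l) • ContinuousLinearMap.proj (R := ℝ) l) x :=
    hasFDerivAt_pi'.2 fun l => by
      rw [ContinuousLinearMap.proj_pi]
      exact (hs l).hasDerivAt.comp_hasFDerivAt x (hasFDerivAt_apply l x)
  exact DFunLike.congr_fun (hg.hasFDerivAt.comp x hmap).fderiv v

theorem fderiv_comp_mulVec_map_mulVec_apply_single [DecidableEq ι] [Fintype ν] [DecidableEq ν]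
    {f : (ν → ℝ) → ℝ} {s : ℝ → ℝ} (A1 : Matrix κ ι ℝ) (A2 : Matrix ν κ ℝ)
    (hf : Differentiable ℝ f) (hs : Differentiable ℝ s) (x : ι → ℝ) (j : ι) :
    fderiv ℝ (fun y => f (A2 *ᵥ fun l => s ((A1 *ᵥ y) l))) x (Pi.single j 1)
      = ∑ l, ((∑ q, fderiv ℝ f (A2 *ᵥ fun r => s ((A1 *ᵥ x) r)) (Pi.single q 1) * A2 q l)
          * deriv s ((A1 *ᵥ x) l)) * A1 l j := by
  have hinner : Differentiable ℝ fun z : κ → ℝ => f (A2 *ᵥ fun l => s (z l)) := by fun_prop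
  rw [fderiv_comp_mulVec_apply A1 (hinner _),
    fderiv_comp_map_apply (g := fun v => f (A2 *ᵥ v)) (by fun_prop) fun l => hs _,
    fderiv_comp_mulVec_apply A2 (hf _), ContinuousLinearMap.apply_eq_sum_mul_apply_single,
    mulVec_single_one]
  simp only [mulVec, dotProduct, col_apply, Finset.sum_mul]
  exact Finset.sum_congr rfl (fun q _ => Finset.sum_congr rfl fun l _ => by ring) |>.trans
    Finset.sum_comm

end ChainRule

theorem one_hidden_layer_moment_factorization_general (n k m : ℕ)
    (p : (Fin n → ℝ) → ℝ) (s : ℝ → ℝ) (σ2 : (Fin m → ℝ) → (Fin m → ℝ))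
    (A1 : Matrix (Fin k) (Fin n) ℝ) (A2 : Matrix (Fin m) (Fin k) ℝ)
    (μ : Measure (Fin n → ℝ))
    (hs : ContDiff ℝ 1 s) (hσ2 : ContDiff ℝ 1 σ2)
    (M : Matrix (Fin m) (Fin n) ℝ) (B : Matrix (Fin m) (Fin k) ℝ)
    (hM : ∀ i j, M i j = ∫ x,
      σ2 (A2.mulVec fun l => s (A1.mulVec x l)) i *
        fderiv ℝ (fun y => Real.log (p y)) x (Pi.single j 1) ∂μ)
    (hB : ∀ i l, B i l = ∫ x,
      (∑ q, fderiv ℝ (fun v => σ2 v i) (A2.mulVec fun r => s (A1.mulVec x r)) (Pi.single q 1)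
          * A2 q l) * deriv s (A1.mulVec x l) ∂μ)
    -- Stein regularity: the integration-by-parts identity holds for the network output.
    (hStein : ∀ i j, (∫ x,
        σ2 (A2.mulVec fun l => s (A1.mulVec x l)) i *
          fderiv ℝ (fun y => Real.log (p y)) x (Pi.single j 1) ∂μ)
      = -∫ x, fderiv ℝ (fun y => σ2 (A2.mulVec fun l => s (A1.mulVec y l)) i) x
          (Pi.single j 1) ∂μ)
    (hBint : ∀ i l, Integrable (fun x =>
      (∑ q, fderiv ℝ (fun v => σ2 v i) (A2.mulVec fun r => s (A1.mulVec x r)) (Pi.single q 1)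
          * A2 q l) * deriv s (A1.mulVec x l)) μ) :
    M = -(B * A1) ∧
      Submodule.span ℝ (Set.range M) ≤ Submodule.span ℝ (Set.range A1) := by
  have hentry : ∀ i j, M i j = -∑ l, B i l * A1 l j := by
    intro i j
    have hσ2i : Differentiable ℝ fun v => σ2 v i :=
      differentiable_pi.1 (hσ2.differentiable one_ne_zero) i
    rw [hM, hStein,
      integral_congr_ae (ae_of_all _ fun x =>
        fderiv_comp_mulVec_map_mulVec_apply_single A1 A2 hσ2i (hs.differentiable one_ne_zero) x j),
      integral_finsetSum _ fun l _ => (hBint i l).mul_const _]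
    simp only [integral_mul_const, hB]
  have hM_eq : M = -(B * A1) := by
    ext i j
    rw [hentry, Matrix.neg_apply, mul_apply]
  refine ⟨hM_eq, ?_⟩
  rw [hM_eq, ← Matrix.neg_mul]
  exact Matrix.span_range_mul_le _ _

/-- Moment factorization for a one-hidden-layer network:
`M = E[y(X) (∇log p(X))ᵀ] = -E[Dσ₂(A₂σ₁(A₁X)) A₂ diag(σ₁'(A₁X))] A₁`, and in particular
the row space of `M` is contained in the row space of `A₁`. -/
theorem one_hidden_layer_moment_factorization (n k m : ℕ)
    (p : (Fin n → ℝ) → ℝ) (s : ℝ → ℝ) (σ2 : (Fin m → ℝ) → (Fin m → ℝ))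
    (A1 : Matrix (Fin k) (Fin n) ℝ) (A2 : Matrix (Fin m) (Fin k) ℝ)
    (μ : Measure (Fin n → ℝ))
    (hμ : μ = volume.withDensity fun x => ENNReal.ofReal (p x))
    (hp : ContDiff ℝ 1 p) (hppos : ∀ x, 0 < p x) (hpint : ∫ x, p x = 1)
    (hs : ContDiff ℝ 1 s) (hσ2 : ContDiff ℝ 1 σ2)
    (M : Matrix (Fin m) (Fin n) ℝ) (B : Matrix (Fin m) (Fin k) ℝ)
    (hM : ∀ i j, M i j = ∫ x,
      σ2 (A2.mulVec fun l => s (A1.mulVec x l)) i *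
        fderiv ℝ (fun y => Real.log (p y)) x (Pi.single j 1) ∂μ)
    (hB : ∀ i l, B i l = ∫ x,
      (∑ q, fderiv ℝ (fun v => σ2 v i) (A2.mulVec fun r => s (A1.mulVec x r)) (Pi.single q 1)
          * A2 q l) * deriv s (A1.mulVec x l) ∂μ)
    -- Stein regularity: the integration-by-parts identity holds for the network output.
    (hStein : ∀ i j, (∫ x,
        σ2 (A2.mulVec fun l => s (A1.mulVec x l)) i *
          fderiv ℝ (fun y => Real.log (p y)) x (Pi.single j 1) ∂μ)
      = -∫ x, fderiv ℝ (fun y => σ2 (A2.mulVec fun l => s (A1.mulVec y l)) i) x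
          (Pi.single j 1) ∂μ)
    (hBint : ∀ i l, Integrable (fun x =>
      (∑ q, fderiv ℝ (fun v => σ2 v i) (A2.mulVec fun r => s (A1.mulVec x r)) (Pi.single q 1)
          * A2 q l) * deriv s (A1.mulVec x l)) μ) :
    M = -(B * A1) ∧
      Submodule.span ℝ (Set.range M) ≤ Submodule.span ℝ (Set.range A1) :=
  one_hidden_layer_moment_factorization_general n k m p s σ2 A1 A2 μ hs hσ2 M B hM hB hStein hBint
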